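/- Let f : ℝ × ℝ² → ℝ, u : ℝ × ℝ³ → ℝ³, p : ℝ × ℝ³ → ℝ, and F : ℝ × ℝ³ → ℝ^{3×3} be smooth. Assume: (i) the kinematic boundary condition u̲·N_f = ∂_t f holds on ℝ × ℝ²; (ii) the momentum equation ∂_t u_i + Σ_{m=1}^{3} u_m ∂_m u_i + ∂_i p = Σ_{j=1}^{3} Σ_{m=1}^{3} F_{mj} ∂_m F_{ij} holds on all of ℝ × ℝ³ for i = 1,2,3; and (iii) F̲_k · N_f = 0 on ℝ × ℝ² for each column k. For i ∈ {1,2}, let φ_i : ℝ × ℝ³ → ℝ be smooth with φ_i(t, x', f(t,x')) = ∂_i f(t,x') for all (t,x'), and set q_i = ∂_i p + (∂₃ p) φ_i. Then at every (t,x') ∈ ℝ × ℝ²: D_t(D_t(∂_i f)) = (∂₃p)̲ · ( N_f · (∇φ_i)̲ ) + Σ_{k=1}^{3} D_{F_k}(D_{F_k}(∂_i f)) + 2 Σ_{k=1}^{3} Σ_{s=1}^{2} (∂_i F̲_{sk}) D_{F_k}(∂_s f) − 2 Σ_{j=1}^{2} (∂_i u̲_j) D_t(∂_j f) − N_f ·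 (∇q_i)̲, where (∇h)̲(t,x') = (∇_x h)(t, x', f(t,x')). -/

import Mathlib

open scoped BigOperators

noncomputable section

/-! Partial derivatives of curried functions of several real variables. -/

/-- derivative in the 1st of 2 arguments -/
def d1_2 (g : ℝ → ℝ → ℝ) : ℝ → ℝ → ℝ := fun a b => deriv (fun s => g s b) a
/-- derivative in the 2nd of 2 arguments -/
def d2_2 (g : ℝ → ℝ → ℝ) : ℝ → ℝ → ℝ := fun a b => deriv (fun s => g a s) b

/-- derivative in the 1st of 3 arguments -/
def d1_3 (g : ℝ → ℝ → ℝ → ℝ) : ℝ → ℝ → ℝ → ℝ := fun a b c => deriv (fun s => g s b c) a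
/-- derivative in the 2nd of 3 arguments -/
def d2_3 (g : ℝ → ℝ → ℝ → ℝ) : ℝ → ℝ → ℝ → ℝ := fun a b c => deriv (fun s => g a s c) b
/-- derivative in the 3rd of 3 arguments -/
def d3_3 (g : ℝ → ℝ → ℝ → ℝ) : ℝ → ℝ → ℝ → ℝ := fun a b c => deriv (fun s => g a b s) c

/-- derivative in the 1st of 4 arguments -/
def d1_4 (g : ℝ → ℝ → ℝ → ℝ → ℝ) : ℝ → ℝ → ℝ → ℝ → ℝ := fun a b c e => deriv (fun s => g s b c e) a
/-- derivative in the 2nd of 4 arguments -/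
def d2_4 (g : ℝ → ℝ → ℝ → ℝ → ℝ) : ℝ → ℝ → ℝ → ℝ → ℝ := fun a b c e => deriv (fun s => g a s c e) b
/-- derivative in the 3rd of 4 arguments -/
def d3_4 (g : ℝ → ℝ → ℝ → ℝ → ℝ) : ℝ → ℝ → ℝ → ℝ → ℝ := fun a b c e => deriv (fun s => g a b s e) c
/-- derivative in the 4th of 4 arguments -/
def d4_4 (g : ℝ → ℝ → ℝ → ℝ → ℝ) : ℝ → ℝ → ℝ → ℝ → ℝ := fun a b c e => deriv (fun s => g a b c s) e

/-- spatial derivatives ∂₁, ∂₂, ∂₃ of v(t, x₁, x₂, x₃) -/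
def dsp : Fin 3 → (ℝ → ℝ → ℝ → ℝ → ℝ) → (ℝ → ℝ → ℝ → ℝ → ℝ) := ![d2_4, d3_4, d4_4]
/-- tangential derivatives ∂₁, ∂₂ of g(t, x₁, x₂) -/
def dtg : Fin 2 → (ℝ → ℝ → ℝ → ℝ) → (ℝ → ℝ → ℝ → ℝ) := ![d2_3, d3_3]
/-- spatial derivatives ∂₁, ∂₂, ∂₃ of v(x₁, x₂, x₃) -/
def dsp3 : Fin 3 → (ℝ → ℝ → ℝ → ℝ) → (ℝ → ℝ → ℝ → ℝ) := ![d1_3, d2_3, d3_3]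
/-- derivatives ∂₁, ∂₂ of g(x₁, x₂) -/
def dtg2 : Fin 2 → (ℝ → ℝ → ℝ) → (ℝ → ℝ → ℝ) := ![d1_2, d2_2]

/-- C^∞ smoothness for a function of 2 real variables -/
def smooth2 (g : ℝ → ℝ → ℝ) : Prop :=
  ContDiff ℝ (⊤ : ℕ∞) (fun p : ℝ × ℝ => g p.1 p.2)
/-- C^∞ smoothness for a function of 3 real variables -/
def smooth3 (g : ℝ → ℝ → ℝ → ℝ) : Prop :=
  ContDiff ℝ (⊤ : ℕ∞) (fun p : ℝ × ℝ × ℝ => g p.1 p.2.1 p.2.2)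
/-- C^∞ smoothness for a function of 4 real variables -/
def smooth4 (g : ℝ → ℝ → ℝ → ℝ → ℝ) : Prop :=
  ContDiff ℝ (⊤ : ℕ∞) (fun p : ℝ × ℝ × ℝ × ℝ => g p.1 p.2.1 p.2.2.1 p.2.2.2)

/-- trace of v(t,x₁,x₂,x₃) on the graph x₃ = f(t,x₁,x₂) -/
def tr (v : ℝ → ℝ → ℝ → ℝ → ℝ) (f : ℝ → ℝ → ℝ → ℝ) : ℝ → ℝ → ℝ → ℝ :=
  fun t x y => v t x y (f t x y)
/-- trace of v(x₁,x₂,x₃) on the graph x₃ = f(x₁,x₂) -/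
def tr2 (v : ℝ → ℝ → ℝ → ℝ) (f : ℝ → ℝ → ℝ) : ℝ → ℝ → ℝ :=
  fun x y => v x y (f x y)

/-- the (non-normalized) outward normal N_f = (−∂₁f, −∂₂f, 1) of the graph of f(t,·) -/
def Nf (f : ℝ → ℝ → ℝ → ℝ) : Fin 3 → ℝ → ℝ → ℝ → ℝ :=
  ![fun t x y => -(d2_3 f t x y), fun t x y => -(d3_3 f t x y), fun _ _ _ => 1]
/-- the (non-normalized) outward normal of the graph of a time-independent f -/
def Nf2 (f : ℝ → ℝ → ℝ) : Fin 3 → ℝ → ℝ → ℝ :=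
  ![fun x y => -(d1_2 f x y), fun x y => -(d2_2 f x y), fun _ _ => 1]

/-- the interface material derivative D_t g = ∂_t g + u̲₁ ∂₁ g + u̲₂ ∂₂ g -/
def Dt (u : Fin 3 → ℝ → ℝ → ℝ → ℝ → ℝ) (f : ℝ → ℝ → ℝ → ℝ)
    (g : ℝ → ℝ → ℝ → ℝ) : ℝ → ℝ → ℝ → ℝ :=
  fun t x y => d1_3 g t x y + tr (u 0) f t x y * d2_3 g t x y + tr (u 1) f t x y * d3_3 g t x y

/-- the material derivative D_t g = ∂_t g + u₁ ∂₁ g + u₂ ∂₂ g for given coefficients u₁,u₂ on ℝ×ℝ² -/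
def Dt2 (u : Fin 2 → ℝ → ℝ → ℝ → ℝ) (g : ℝ → ℝ → ℝ → ℝ) : ℝ → ℝ → ℝ → ℝ :=
  fun t x y => d1_3 g t x y + u 0 t x y * d2_3 g t x y + u 1 t x y * d3_3 g t x y

/-- the tangential deformation derivative D_{F_k} g = F̲₁ₖ ∂₁ g + F̲₂ₖ ∂₂ g -/
def DF (F : Fin 3 → Fin 3 → ℝ → ℝ → ℝ → ℝ → ℝ) (f : ℝ → ℝ → ℝ → ℝ) (k : Fin 3)
    (g : ℝ → ℝ → ℝ → ℝ) : ℝ → ℝ → ℝ → ℝ :=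
  fun t x y => tr (F 0 k) f t x y * d2_3 g t x y + tr (F 1 k) f t x y * d3_3 g t x y

/-- the full material derivative D_t g = ∂_t g + Σ u_m ∂_m g on ℝ×ℝ³ -/
def Dt4 (u : Fin 3 → ℝ → ℝ → ℝ → ℝ → ℝ) (g : ℝ → ℝ → ℝ → ℝ → ℝ) : ℝ → ℝ → ℝ → ℝ → ℝ :=
  fun t x y z => d1_4 g t x y z + ∑ m : Fin 3, u m t x y z * dsp m g t x y z

/-- the spatial Laplacian on ℝ×ℝ³ -/
def lap4 (g : ℝ → ℝ → ℝ → ℝ → ℝ) : ℝ → ℝ → ℝ → ℝ → ℝ :=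
  fun t x y z => ∑ k : Fin 3, dsp k (dsp k g) t x y z

open scoped ContDiff

/-!
Write `D_w = κ ∂_t + w₁ ∂₁ + w₂ ∂₂` for a spacetime direction `(κ, w)` tangent to the moving
graph, i.e. `w · N_f = κ ∂_t f`. Both `D_t` (`κ = 1`, `w = u̲`) and `D_{F_k}` (`κ = 0`,
`w = F̲_k`) are of this form, and when `w = W̲` tangency says exactly that `D_w` of a trace is the
trace of the interior derivative `κ ∂_t + W · ∇`. Tangency also reads `D_w f = w₃`; applying `∂_i` and the
commutator `[∂_i, D_w] = Σ_j (∂_i w_j) ∂_j` gives `D_w (∂_i f) = N_f · ∂_i w`. Applying `D_w`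
once more and the same commutator,
  `N_f · ∂_i (D_w w) = D_w² (∂_i f) + 2 Σ_j (∂_i w_j) D_w (∂_j f)`.
For `w = u̲` the traced momentum equation gives `D_t u̲ = Σ_k D_{F_k} F̲_k − (∇p)̲`; the identity
for `w = F̲_k` handles the deformation terms, and `∂_i (∂_m p)̲ = (∂_m q_i)̲ − (∂_m φ_i)̲ (∂₃ p)̲`
(because `φ_i = ∂_i f` on the graph) handles the pressure.
-/

theorem minSmoothness_two_le_infty : minSmoothness ℝ 2 ≤ ∞ := by
  rw [minSmoothness_of_isRCLikeNormedField]
  exact WithTop.coe_le_coe.mpr le_top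

def uncurry3 (g : ℝ → ℝ → ℝ → ℝ) : ℝ × ℝ × ℝ → ℝ := fun p => g p.1 p.2.1 p.2.2

def tangentBasis : Fin 2 → ℝ × ℝ × ℝ := ![(0, 1, 0), (0, 0, 1)]

section ThreeVariables

variable {g h : ℝ → ℝ → ℝ → ℝ}

theorem smooth3.differentiableAt (hg : smooth3 g) (p : ℝ × ℝ × ℝ) :
    DifferentiableAt ℝ (uncurry3 g) p :=
  (hg.differentiable (by simp)).differentiableAt

theorem fderiv_uncurry3_apply (hg : smooth3 g) (a b c : ℝ) (v : ℝ × ℝ × ℝ) :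
    fderiv ℝ (uncurry3 g) (a, b, c) v
      = v.1 * d1_3 g a b c + v.2.1 * d2_3 g a b c + v.2.2 * d3_3 g a b c := by
  have hG := (hg.differentiableAt (a, b, c)).hasFDerivAt
  have e₁ : fderiv ℝ (uncurry3 g) (a, b, c) (1, 0, 0) = d1_3 g a b c :=
    ((hG.comp_hasDerivAt a ((hasDerivAt_id a).prodMk
      ((hasDerivAt_const a b).prodMk (hasDerivAt_const a c)))).deriv).symm
  have e₂ : fderiv ℝ (uncurry3 g) (a, b, c) (0, 1, 0) = d2_3 g a b c :=
    ((hG.comp_hasDerivAt b ((hasDerivAt_const b a).prodMk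
      ((hasDerivAt_id b).prodMk (hasDerivAt_const b c)))).deriv).symm
  have e₃ : fderiv ℝ (uncurry3 g) (a, b, c) (0, 0, 1) = d3_3 g a b c :=
    ((hG.comp_hasDerivAt c ((hasDerivAt_const c a).prodMk
      ((hasDerivAt_const c b).prodMk (hasDerivAt_id c)))).deriv).symm
  have hv : v = v.1 • ((1, 0, 0) : ℝ × ℝ × ℝ) + v.2.1 • (0, 1, 0) + v.2.2 • (0, 0, 1) := by
    ext <;> simp
  rw [hv, map_add, map_add, map_smul, map_smul, map_smul, e₁, e₂, e₃]
  simp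

theorem smooth3.mul (hg : smooth3 g) (hh : smooth3 h) :
    smooth3 (fun t x y => g t x y * h t x y) :=
  ContDiff.mul hg hh

theorem smooth3.sub (hg : smooth3 g) (hh : smooth3 h) :
    smooth3 (fun t x y => g t x y - h t x y) :=
  ContDiff.sub hg hh

theorem smooth3.sum {ι : Type*} {s : Finset ι} {g : ι → ℝ → ℝ → ℝ → ℝ}
    (hg : ∀ k ∈ s, smooth3 (g k)) : smooth3 (fun t x y => ∑ k ∈ s, g k t x y) :=
  ContDiff.sum hg

theorem dtg_apply_eq_fderiv (hg : smooth3 g) (i : Fin 2) (a b c : ℝ) :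
    dtg i g a b c = fderiv ℝ (uncurry3 g) (a, b, c) (tangentBasis i) := by
  fin_cases i <;> simp [fderiv_uncurry3_apply hg, tangentBasis, dtg]

theorem uncurry3_dtg (hg : smooth3 g) (i : Fin 2) :
    uncurry3 (dtg i g) = fun p => fderiv ℝ (uncurry3 g) p (tangentBasis i) :=
  funext fun ⟨a, b, c⟩ => dtg_apply_eq_fderiv hg i a b c

theorem smooth3_dtg (hg : smooth3 g) (i : Fin 2) : smooth3 (dtg i g) := by
  show ContDiff ℝ ∞ (uncurry3 (dtg i g))
  rw [uncurry3_dtg hg]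
  exact (hg.fderiv_right (m := ∞) le_rfl).clm_apply contDiff_const

theorem dtg_sub (hg : smooth3 g) (hh : smooth3 h) (i : Fin 2) (a b c : ℝ) :
    dtg i (fun t x y => g t x y - h t x y) a b c = dtg i g a b c - dtg i h a b c := by
  rw [dtg_apply_eq_fderiv (hg.sub hh), dtg_apply_eq_fderiv hg, dtg_apply_eq_fderiv hh]
  exact congrArg (· (tangentBasis i))
    (fderiv_fun_sub (hg.differentiableAt _) (hh.differentiableAt _))

theorem dtg_sum {ι : Type*} {s : Finset ι} {g : ι → ℝ → ℝ → ℝ → ℝ}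
    (hg : ∀ k ∈ s, smooth3 (g k)) (i : Fin 2) (a b c : ℝ) :
    dtg i (fun t x y => ∑ k ∈ s, g k t x y) a b c = ∑ k ∈ s, dtg i (g k) a b c := by
  rw [dtg_apply_eq_fderiv (smooth3.sum hg),
    show uncurry3 (fun t x y => ∑ k ∈ s, g k t x y) = fun p => ∑ k ∈ s, uncurry3 (g k) p from rfl,
    fderiv_fun_sum fun k hk => (hg k hk).differentiableAt _, sum_apply]
  exact Finset.sum_congr rfl fun k hk => (dtg_apply_eq_fderiv (hg k hk) i a b c).symm

end ThreeVariables

def uncurry4 (v : ℝ → ℝ → ℝ → ℝ → ℝ) : ℝ × ℝ × ℝ × ℝ → ℝ :=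
  fun P => v P.1 P.2.1 P.2.2.1 P.2.2.2

def spatialBasis : Fin 3 → ℝ × ℝ × ℝ × ℝ := ![(0, 1, 0, 0), (0, 0, 1, 0), (0, 0, 0, 1)]

section FourVariables

variable {v w : ℝ → ℝ → ℝ → ℝ → ℝ}

theorem smooth4.differentiableAt (hv : smooth4 v) (P : ℝ × ℝ × ℝ × ℝ) :
    DifferentiableAt ℝ (uncurry4 v) P :=
  (hv.differentiable (by simp)).differentiableAt

theorem smooth4.add (hv : smooth4 v) (hw : smooth4 w) :
    smooth4 (fun t x y z => v t x y z + w t x y z) :=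
  ContDiff.add hv hw

theorem smooth4.mul (hv : smooth4 v) (hw : smooth4 w) :
    smooth4 (fun t x y z => v t x y z * w t x y z) :=
  ContDiff.mul hv hw

theorem fderiv_uncurry4_apply (hv : smooth4 v) (a b c e : ℝ) (V : ℝ × ℝ × ℝ × ℝ) :
    fderiv ℝ (uncurry4 v) (a, b, c, e) V
      = V.1 * d1_4 v a b c e + V.2.1 * d2_4 v a b c e + V.2.2.1 * d3_4 v a b c e
        + V.2.2.2 * d4_4 v a b c e := by
  have hG := (hv.differentiableAt (a, b, c, e)).hasFDerivAt
  have e₁ : fderiv ℝ (uncurry4 v) (a, b, c, e) (1, 0, 0, 0) = d1_4 v a b c e :=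
    ((hG.comp_hasDerivAt a ((hasDerivAt_id a).prodMk ((hasDerivAt_const a b).prodMk
      ((hasDerivAt_const a c).prodMk (hasDerivAt_const a e))))).deriv).symm
  have e₂ : fderiv ℝ (uncurry4 v) (a, b, c, e) (0, 1, 0, 0) = d2_4 v a b c e :=
    ((hG.comp_hasDerivAt b ((hasDerivAt_const b a).prodMk ((hasDerivAt_id b).prodMk
      ((hasDerivAt_const b c).prodMk (hasDerivAt_const b e))))).deriv).symm
  have e₃ : fderiv ℝ (uncurry4 v) (a, b, c, e) (0, 0, 1, 0) = d3_4 v a b c e :=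
    ((hG.comp_hasDerivAt c ((hasDerivAt_const c a).prodMk ((hasDerivAt_const c b).prodMk
      ((hasDerivAt_id c).prodMk (hasDerivAt_const c e))))).deriv).symm
  have e₄ : fderiv ℝ (uncurry4 v) (a, b, c, e) (0, 0, 0, 1) = d4_4 v a b c e :=
    ((hG.comp_hasDerivAt e ((hasDerivAt_const e a).prodMk ((hasDerivAt_const e b).prodMk
      ((hasDerivAt_const e c).prodMk (hasDerivAt_id e))))).deriv).symm
  have hV : V = V.1 • ((1, 0, 0, 0) : ℝ × ℝ × ℝ × ℝ) + V.2.1 • (0, 1, 0, 0)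
      + V.2.2.1 • (0, 0, 1, 0) + V.2.2.2 • (0, 0, 0, 1) := by
    ext <;> simp
  rw [hV, map_add, map_add, map_add, map_smul, map_smul, map_smul, map_smul, e₁, e₂, e₃, e₄]
  simp

theorem dsp_apply_eq_fderiv (hv : smooth4 v) (m : Fin 3) (a b c e : ℝ) :
    dsp m v a b c e = fderiv ℝ (uncurry4 v) (a, b, c, e) (spatialBasis m) := by
  fin_cases m <;> simp [fderiv_uncurry4_apply hv, spatialBasis, dsp]

theorem uncurry4_dsp (hv : smooth4 v) (m : Fin 3) :
    uncurry4 (dsp m v) = fun P => fderiv ℝ (uncurry4 v) P (spatialBasis m) :=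
  funext fun ⟨a, b, c, e⟩ => dsp_apply_eq_fderiv hv m a b c e

theorem smooth4_dsp (hv : smooth4 v) (m : Fin 3) : smooth4 (dsp m v) := by
  show ContDiff ℝ ∞ (uncurry4 (dsp m v))
  rw [uncurry4_dsp hv m]
  exact (hv.fderiv_right (m := ∞) le_rfl).clm_apply contDiff_const

theorem dsp_comm (hv : smooth4 v) (m n : Fin 3) : dsp m (dsp n v) = dsp n (dsp m v) := by
  funext a b c e
  rw [dsp_apply_eq_fderiv (smooth4_dsp hv n), dsp_apply_eq_fderiv (smooth4_dsp hv m),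
    uncurry4_dsp hv, uncurry4_dsp hv]
  -- the Lie bracket of two constant fields vanishes
  have h := VectorField.fderiv_apply_lieBracket (f := uncurry4 v)
    (V := fun _ => spatialBasis m) (W := fun _ => spatialBasis n)
    (hv.contDiffAt (x := (a, b, c, e))) minSmoothness_two_le_infty
    (differentiableAt_const _) (differentiableAt_const _)
  simp only [VectorField.lieBracket, fderiv_const_apply, zero_apply, sub_zero, map_zero] at h
  linear_combination -h

theorem dsp_add (hv : smooth4 v) (hw : smooth4 w) (m : Fin 3) (a b c e : ℝ) :
    dsp m (fun t x y z => v t x y z + w t x y z) a b c e = dsp m v a b c e + dsp m w a b c e := by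
  rw [dsp_apply_eq_fderiv (hv.add hw), dsp_apply_eq_fderiv hv, dsp_apply_eq_fderiv hw]
  exact congrArg (· (spatialBasis m))
    (fderiv_fun_add (hv.differentiableAt _) (hw.differentiableAt _))

theorem dsp_mul (hv : smooth4 v) (hw : smooth4 w) (m : Fin 3) (a b c e : ℝ) :
    dsp m (fun t x y z => v t x y z * w t x y z) a b c e
      = dsp m v a b c e * w a b c e + v a b c e * dsp m w a b c e := by
  rw [dsp_apply_eq_fderiv (hv.mul hw), dsp_apply_eq_fderiv hv, dsp_apply_eq_fderiv hw,
    show uncurry4 (fun t x y z => v t x y z * w t x y z) = fun P => uncurry4 v P * uncurry4 w P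
      from rfl, fderiv_fun_mul (hv.differentiableAt _) (hw.differentiableAt _)]
  simp only [add_apply, smul_apply, smul_eq_mul, uncurry4]
  ring

end FourVariables

section Traces

variable {v : ℝ → ℝ → ℝ → ℝ → ℝ} {f : ℝ → ℝ → ℝ → ℝ}

theorem smooth3_tr (hv : smooth4 v) (hf : smooth3 f) : smooth3 (tr v f) :=
  hv.comp (contDiff_fst.prodMk (contDiff_snd.fst.prodMk (contDiff_snd.snd.prodMk hf)))

theorem fderiv_uncurry3_tr (hv : smooth4 v) (hf : smooth3 f) (a b c : ℝ) (V : ℝ × ℝ × ℝ) :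
    fderiv ℝ (uncurry3 (tr v f)) (a, b, c) V
      = fderiv ℝ (uncurry4 v) (a, b, c, f a b c)
          (V.1, V.2.1, V.2.2, fderiv ℝ (uncurry3 f) (a, b, c) V) := by
  have hgraph : HasFDerivAt (fun p : ℝ × ℝ × ℝ => (p.1, p.2.1, p.2.2, uncurry3 f p)) _ (a, b, c) :=
    hasFDerivAt_fst.prodMk (hasFDerivAt_snd.fst.prodMk
      (hasFDerivAt_snd.snd.prodMk (hf.differentiableAt (a, b, c)).hasFDerivAt))
  rw [show uncurry3 (tr v f) = uncurry4 v ∘ fun p => (p.1, p.2.1, p.2.2, uncurry3 f p) from rfl,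
    ((hv.differentiableAt _).hasFDerivAt.comp (a, b, c) hgraph).fderiv]
  rfl

theorem dtg_tr (hv : smooth4 v) (hf : smooth3 f) (i : Fin 2) (a b c : ℝ) :
    dtg i (tr v f) a b c
      = tr (dsp i.castSucc v) f a b c + tr (dsp 2 v) f a b c * dtg i f a b c := by
  rw [dtg_apply_eq_fderiv (smooth3_tr hv hf), fderiv_uncurry3_tr hv hf,
    fderiv_uncurry4_apply hv, ← dtg_apply_eq_fderiv hf]
  fin_cases i <;> simp [tangentBasis, tr, dsp, mul_comm]

end Traces

/-- `D_w = κ ∂_t + (w 0) ∂₁ + (w 1) ∂₂`; the component `w 2` enters only `IsTangentToGraph`. -/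
def tangentialDeriv (κ : ℝ) (w : Fin 3 → ℝ → ℝ → ℝ → ℝ) (g : ℝ → ℝ → ℝ → ℝ) :
    ℝ → ℝ → ℝ → ℝ :=
  fun t x y => κ * d1_3 g t x y + w 0 t x y * d2_3 g t x y + w 1 t x y * d3_3 g t x y

theorem Dt_eq_tangentialDeriv (u : Fin 3 → ℝ → ℝ → ℝ → ℝ → ℝ) (f : ℝ → ℝ → ℝ → ℝ) :
    Dt u f = tangentialDeriv 1 (fun m => tr (u m) f) := by
  funext g t x y
  simp [Dt, tangentialDeriv]

theorem DF_eq_tangentialDeriv (F : Fin 3 → Fin 3 → ℝ → ℝ → ℝ → ℝ → ℝ) (f : ℝ → ℝ → ℝ → ℝ)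
    (k : Fin 3) : DF F f k = tangentialDeriv 0 (fun m => tr (F m k) f) := by
  funext g t x y
  simp [DF, tangentialDeriv]

section TangentialDerivative

variable {κ : ℝ} {w : Fin 3 → ℝ → ℝ → ℝ → ℝ} {g h : ℝ → ℝ → ℝ → ℝ}

theorem tangentialDeriv_apply_eq_fderiv (hg : smooth3 g) (a b c : ℝ) :
    tangentialDeriv κ w g a b c = fderiv ℝ (uncurry3 g) (a, b, c) (κ, w 0 a b c, w 1 a b c) := by
  rw [fderiv_uncurry3_apply hg]
  rfl

theorem uncurry3_tangentialDeriv (hg : smooth3 g) :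
    uncurry3 (tangentialDeriv κ w g)
      = fun p => fderiv ℝ (uncurry3 g) p (κ, uncurry3 (w 0) p, uncurry3 (w 1) p) :=
  funext fun ⟨a, b, c⟩ => tangentialDeriv_apply_eq_fderiv hg a b c

theorem smooth3_tangentialDeriv (hg : smooth3 g) (hw₀ : smooth3 (w 0)) (hw₁ : smooth3 (w 1)) :
    smooth3 (tangentialDeriv κ w g) := by
  show ContDiff ℝ ∞ (uncurry3 (tangentialDeriv κ w g))
  rw [uncurry3_tangentialDeriv hg]
  exact (hg.fderiv_right (m := ∞) le_rfl).clm_apply (contDiff_const.prodMk (hw₀.prodMk hw₁))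

theorem tangentialDeriv_mul (hg : smooth3 g) (hh : smooth3 h) (a b c : ℝ) :
    tangentialDeriv κ w (fun t x y => g t x y * h t x y) a b c
      = tangentialDeriv κ w g a b c * h a b c + g a b c * tangentialDeriv κ w h a b c := by
  rw [tangentialDeriv_apply_eq_fderiv (hg.mul hh), tangentialDeriv_apply_eq_fderiv hg,
    tangentialDeriv_apply_eq_fderiv hh,
    show uncurry3 (fun t x y => g t x y * h t x y) = fun p => uncurry3 g p * uncurry3 h p from rfl,
    fderiv_fun_mul (hg.differentiableAt _) (hh.differentiableAt _)]
  simp only [add_apply, smul_apply, smul_eq_mul, uncurry3]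
  ring

theorem tangentialDeriv_sum {ι : Type*} {s : Finset ι} {g : ι → ℝ → ℝ → ℝ → ℝ}
    (hg : ∀ k ∈ s, smooth3 (g k)) (a b c : ℝ) :
    tangentialDeriv κ w (fun t x y => ∑ k ∈ s, g k t x y) a b c
      = ∑ k ∈ s, tangentialDeriv κ w (g k) a b c := by
  rw [tangentialDeriv_apply_eq_fderiv (smooth3.sum hg),
    show uncurry3 (fun t x y => ∑ k ∈ s, g k t x y) = fun p => ∑ k ∈ s, uncurry3 (g k) p from rfl,
    fderiv_fun_sum fun k hk => (hg k hk).differentiableAt _, sum_apply]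
  exact Finset.sum_congr rfl fun k hk => (tangentialDeriv_apply_eq_fderiv (hg k hk) a b c).symm

theorem dtg_tangentialDeriv (hg : smooth3 g) (hw₀ : smooth3 (w 0)) (hw₁ : smooth3 (w 1))
    (i : Fin 2) (a b c : ℝ) :
    dtg i (tangentialDeriv κ w g) a b c
      = tangentialDeriv κ w (dtg i g) a b c
        + dtg i (w 0) a b c * d2_3 g a b c + dtg i (w 1) a b c * d3_3 g a b c := by
  -- `[∂ᵢ, D_W]` is the derivative along the Lie bracket of the constant field `eᵢ` with `W`,
  -- which is `∂ᵢ W = (0, ∂ᵢ (w 0), ∂ᵢ (w 1))`.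
  set W : ℝ × ℝ × ℝ → ℝ × ℝ × ℝ := fun p => (κ, uncurry3 (w 0) p, uncurry3 (w 1) p)
  have hW : HasFDerivAt W ((0 : ℝ × ℝ × ℝ →L[ℝ] ℝ).prod ((fderiv ℝ (uncurry3 (w 0)) (a, b, c)).prod
      (fderiv ℝ (uncurry3 (w 1)) (a, b, c)))) (a, b, c) :=
    (hasFDerivAt_const κ _).prodMk
      ((hw₀.differentiableAt _).hasFDerivAt.prodMk (hw₁.differentiableAt _).hasFDerivAt)
  have hbracket := VectorField.fderiv_apply_lieBracket (f := uncurry3 g)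
    (V := fun _ => tangentBasis i) (W := W) hg.contDiffAt minSmoothness_two_le_infty
    hW.differentiableAt (differentiableAt_const _)
  simp only [VectorField.lieBracket, fderiv_const_apply, hW.fderiv, zero_apply, sub_zero,
    ContinuousLinearMap.prod_apply] at hbracket
  rw [fderiv_uncurry3_apply hg, ← dtg_apply_eq_fderiv hw₀, ← dtg_apply_eq_fderiv hw₁] at hbracket
  change _ = _ - fderiv ℝ _ _ (κ, w 0 a b c, w 1 a b c) at hbracket
  rw [dtg_apply_eq_fderiv (smooth3_tangentialDeriv hg hw₀ hw₁), uncurry3_tangentialDeriv hg,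
    tangentialDeriv_apply_eq_fderiv (smooth3_dtg hg i), uncurry3_dtg hg]
  linear_combination -hbracket

end TangentialDerivative

/-- The spacetime direction `(κ, w)` is tangent to the hypersurface `x₃ = f (t, x')`. -/
def IsTangentToGraph (κ : ℝ) (w : Fin 3 → ℝ → ℝ → ℝ → ℝ) (f : ℝ → ℝ → ℝ → ℝ) : Prop :=
  ∀ t x y, ∑ m, w m t x y * Nf f m t x y = κ * d1_3 f t x y

section Graph

variable {κ : ℝ} {w : Fin 3 → ℝ → ℝ → ℝ → ℝ} {f : ℝ → ℝ → ℝ → ℝ}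

theorem IsTangentToGraph.tangentialDeriv_eq (hT : IsTangentToGraph κ w f) :
    tangentialDeriv κ w f = w 2 := by
  funext t x y
  have h := hT t x y
  simp only [Fin.sum_univ_three, Nf, Matrix.cons_val] at h
  simp only [tangentialDeriv]
  linarith

theorem IsTangentToGraph.tangentialDeriv_tr {v : ℝ → ℝ → ℝ → ℝ → ℝ}
    {W : Fin 3 → ℝ → ℝ → ℝ → ℝ → ℝ} (hT : IsTangentToGraph κ (fun m => tr (W m) f) f)
    (hv : smooth4 v) (hf : smooth3 f) :
    tangentialDeriv κ (fun m => tr (W m) f) (tr v f)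
      = tr (fun t x y z => κ * d1_4 v t x y z + ∑ m, W m t x y z * dsp m v t x y z) f := by
  funext a b c
  have hf₂ := congrFun₃ hT.tangentialDeriv_eq a b c
  rw [tangentialDeriv_apply_eq_fderiv hf] at hf₂
  rw [tangentialDeriv_apply_eq_fderiv (smooth3_tr hv hf), fderiv_uncurry3_tr hv hf, hf₂,
    fderiv_uncurry4_apply hv]
  simp only [tr, dsp, Fin.sum_univ_three, Matrix.cons_val_zero, Matrix.cons_val_one,
    Matrix.cons_val]
  ring

theorem smooth3_Nf (hf : smooth3 f) (m : Fin 3) : smooth3 (Nf f m) := by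
  fin_cases m
  · exact (smooth3_dtg hf 0).neg
  · exact (smooth3_dtg hf 1).neg
  · exact contDiff_const

theorem tangentialDeriv_normal_dot {X : Fin 3 → ℝ → ℝ → ℝ → ℝ} (hf : smooth3 f)
    (hX : ∀ m, smooth3 (X m)) (a b c : ℝ) :
    tangentialDeriv κ w (fun t x y => ∑ m, Nf f m t x y * X m t x y) a b c
      = ∑ m, Nf f m a b c * tangentialDeriv κ w (X m) a b c
        - ∑ j : Fin 2, tangentialDeriv κ w (dtg j f) a b c * X j.castSucc a b c := by
  rw [tangentialDeriv_sum fun m _ => (smooth3_Nf hf m).mul (hX m)]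
  simp only [tangentialDeriv_mul (smooth3_Nf hf _) (hX _)]
  -- `D_w N_f = (-D_w ∂₁f, -D_w ∂₂f, 0)`
  simp only [tangentialDeriv, d1_3, Nf, d2_3, d3_3, dtg, Fin.sum_univ_three, Fin.sum_univ_two,
    Matrix.cons_val_zero, Matrix.cons_val_one, Matrix.cons_val, Fin.castSucc_zero, Fin.castSucc_one,
    deriv.fun_neg', deriv_const']
  ring

theorem IsTangentToGraph.tangentialDeriv_dtg (hT : IsTangentToGraph κ w f) (hf : smooth3 f)
    (hw₀ : smooth3 (w 0)) (hw₁ : smooth3 (w 1)) (i : Fin 2) :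
    tangentialDeriv κ w (dtg i f) = fun t x y => ∑ m, Nf f m t x y * dtg i (w m) t x y := by
  funext a b c
  have h := dtg_tangentialDeriv (κ := κ) hf hw₀ hw₁ i a b c
  rw [hT.tangentialDeriv_eq] at h
  simp only [Fin.sum_univ_three, Nf, Matrix.cons_val]
  linarith

theorem IsTangentToGraph.normal_dot_dtg_tangentialDeriv (hT : IsTangentToGraph κ w f)
    (hf : smooth3 f) (hw : ∀ m, smooth3 (w m)) (i : Fin 2) (a b c : ℝ) :
    ∑ m, Nf f m a b c * dtg i (tangentialDeriv κ w (w m)) a b c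
      = tangentialDeriv κ w (tangentialDeriv κ w (dtg i f)) a b c
        + 2 * ∑ j : Fin 2, dtg i (w j.castSucc) a b c * tangentialDeriv κ w (dtg j f) a b c := by
  have hdtg := hT.tangentialDeriv_dtg hf (hw 0) (hw 1)
  rw [hdtg i, tangentialDeriv_normal_dot hf fun m => smooth3_dtg (hw m) i]
  simp only [dtg_tangentialDeriv (hw _) (hw 0) (hw 1), hdtg]
  simp only [dtg, Fin.sum_univ_three, Fin.sum_univ_two, Matrix.cons_val_zero, Matrix.cons_val_one,
    Fin.castSucc_zero, Fin.castSucc_one]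
  ring

end Graph

section Interface

variable {f : ℝ → ℝ → ℝ → ℝ} {u : Fin 3 → ℝ → ℝ → ℝ → ℝ → ℝ} {p : ℝ → ℝ → ℝ → ℝ → ℝ}
  {F : Fin 3 → Fin 3 → ℝ → ℝ → ℝ → ℝ → ℝ}

theorem tangentialDeriv_tr_velocity (hf : smooth3 f) {m : Fin 3} (hum : smooth4 (u m))
    (hFm : ∀ k, smooth4 (F m k)) (hU : IsTangentToGraph 1 (fun l => tr (u l) f) f)
    (hG : ∀ k, IsTangentToGraph 0 (fun l => tr (F l k) f) f)
    (hmom : ∀ t x y z, Dt4 u (u m) t x y z + dsp m p t x y z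
      = ∑ k, ∑ l, F l k t x y z * dsp l (F m k) t x y z) :
    tangentialDeriv 1 (fun l => tr (u l) f) (tr (u m) f)
      = fun t x y => ∑ k, tangentialDeriv 0 (fun l => tr (F l k) f) (tr (F m k) f) t x y
          - tr (dsp m p) f t x y := by
  funext t x y
  simp only [Dt4] at hmom
  simp only [hU.tangentialDeriv_tr hum hf, (hG _).tangentialDeriv_tr (hFm _) hf]
  simp only [tr, one_mul, zero_mul, zero_add]
  linear_combination hmom t x y (f t x y)

theorem dtg_tr_dsp_of_extension (hf : smooth3 f) (hp : smooth4 p) {φ : ℝ → ℝ → ℝ → ℝ → ℝ}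
    (hφ : smooth4 φ) {i : Fin 2} (hφf : ∀ t x y, φ t x y (f t x y) = dtg i f t x y) (m : Fin 3)
    (a b c : ℝ) :
    dtg i (tr (dsp m p) f) a b c
      = tr (dsp m (fun t x y z => dsp i.castSucc p t x y z + dsp 2 p t x y z * φ t x y z)) f a b c
        - tr (dsp m φ) f a b c * tr (dsp 2 p) f a b c := by
  rw [dtg_tr (smooth4_dsp hp m) hf, dsp_comm hp i.castSucc m, dsp_comm hp 2 m, ← hφf]
  simp only [tr]
  rw [dsp_add (smooth4_dsp hp _) ((smooth4_dsp hp 2).mul hφ), dsp_mul (smooth4_dsp hp 2) hφ]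
  ring

theorem dtg_tangentialDeriv_tr_velocity (hf : smooth3 f) {m : Fin 3} (hum : smooth4 (u m))
    (hp : smooth4 p) (hF : ∀ l k, smooth4 (F l k)) (hU : IsTangentToGraph 1 (fun l => tr (u l) f) f)
    (hG : ∀ k, IsTangentToGraph 0 (fun l => tr (F l k) f) f)
    (hmom : ∀ t x y z, Dt4 u (u m) t x y z + dsp m p t x y z
      = ∑ k, ∑ l, F l k t x y z * dsp l (F m k) t x y z) (i : Fin 2) (a b c : ℝ) :
    dtg i (tangentialDeriv 1 (fun l => tr (u l) f) (tr (u m) f)) a b c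
      = ∑ k, dtg i (tangentialDeriv 0 (fun l => tr (F l k) f) (tr (F m k) f)) a b c
        - dtg i (tr (dsp m p) f) a b c := by
  have hDF : ∀ k, smooth3 (tangentialDeriv 0 (fun l => tr (F l k) f) (tr (F m k) f)) := fun k =>
    smooth3_tangentialDeriv (smooth3_tr (hF m k) hf) (smooth3_tr (hF 0 k) hf)
      (smooth3_tr (hF 1 k) hf)
  rw [tangentialDeriv_tr_velocity hf hum (hF m) hU hG hmom,
    dtg_sub (smooth3.sum fun k _ => hDF k) (smooth3_tr (smooth4_dsp hp m) hf),
    dtg_sum fun k _ => hDF k]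

end Interface

/-- the central evolution equation (3.4) for ∂_i f, with an arbitrary smooth
extension φ of ∂_i f. -/
theorem interface_evolution_equation
    (f : ℝ → ℝ → ℝ → ℝ) (u : Fin 3 → ℝ → ℝ → ℝ → ℝ → ℝ)
    (p : ℝ → ℝ → ℝ → ℝ → ℝ) (F : Fin 3 → Fin 3 → ℝ → ℝ → ℝ → ℝ → ℝ)
    (hf : smooth3 f) (hu : ∀ i, smooth4 (u i)) (hp : smooth4 p)
    (hF : ∀ i j, smooth4 (F i j))
    (hkbc : ∀ t x y, (∑ k : Fin 3, tr (u k) f t x y * Nf f k t x y) = d1_3 f t x y)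
    (hmom : ∀ i : Fin 3, ∀ t x y z,
      d1_4 (u i) t x y z + (∑ m : Fin 3, u m t x y z * dsp m (u i) t x y z)
        + dsp i p t x y z
        = ∑ j : Fin 3, ∑ m : Fin 3, F m j t x y z * dsp m (F i j) t x y z)
    (htang : ∀ k : Fin 3, ∀ t x y,
      (∑ m : Fin 3, tr (F m k) f t x y * Nf f m t x y) = 0) :
    ∀ i : Fin 2, ∀ φ : ℝ → ℝ → ℝ → ℝ → ℝ, smooth4 φ →
      (∀ t x y, φ t x y (f t x y) = dtg i f t x y) →
      ∀ t x y,
        Dt u f (Dt u f (dtg i f)) t x y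
          = tr (dsp 2 p) f t x y * (∑ k : Fin 3, Nf f k t x y * tr (dsp k φ) f t x y)
            + (∑ k : Fin 3, DF F f k (DF F f k (dtg i f)) t x y)
            + 2 * ∑ k : Fin 3, ∑ s : Fin 2,
                dtg i (tr (F s.castSucc k) f) t x y * DF F f k (dtg s f) t x y
            - 2 * ∑ j : Fin 2,
                dtg i (tr (u j.castSucc) f) t x y * Dt u f (dtg j f) t x y
            - ∑ k : Fin 3,
                Nf f k t x y
                  * tr (dsp k (fun a b c e =>
                      dsp i.castSucc p a b c e + dsp 2 p a b c e * φ a b c e)) f t x y := by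
  intro i φ hφ hφf t x y
  have hU : IsTangentToGraph 1 (fun m => tr (u m) f) f := fun t x y => by simpa using hkbc t x y
  have hG : ∀ k, IsTangentToGraph 0 (fun m => tr (F m k) f) f := fun k t x y => by
    simpa using htang k t x y
  have hmat := hU.normal_dot_dtg_tangentialDeriv hf (fun m => smooth3_tr (hu m) hf) i t x y
  have hdef := fun k =>
    (hG k).normal_dot_dtg_tangentialDeriv hf (fun m => smooth3_tr (hF m k) hf) i t x y
  have hvel := fun m => dtg_tangentialDeriv_tr_velocity hf (hu m) hp hF hU hG (hmom m) i t x y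
  have hpr := fun m => dtg_tr_dsp_of_extension hf hp hφ hφf m t x y
  simp only [Dt_eq_tangentialDeriv, DF_eq_tangentialDeriv]
  simp only [Fin.sum_univ_three, Fin.sum_univ_two] at hmat hdef hvel hpr ⊢
  linear_combination -hmat + Nf f 0 t x y * hvel 0 + Nf f 1 t x y * hvel 1 + Nf f 2 t x y * hvel 2
    + hdef 0 + hdef 1 + hdef 2
    - Nf f 0 t x y * hpr 0 - Nf f 1 t x y * hpr 1 - Nf f 2 t x y * hpr 2
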